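/- Fix an index 1 ≤ i ≤ r, let u, v ∈ W^{P_i}, y ∈ W_{P_i}, and γ ∈ Φ_{P_i}⁺, and set β := vγ (a positive root, since v ∈ W^{P_i}). Then s_γ y < y if and only if s_β (v y u⁻¹) < v y u⁻¹ in the Bruhat order. -/

import Mathlib

open scoped Classical

/-- Data of a root system with a fixed choice of simple roots: an ambient
`ℚ`-vector space `V`, a set of roots `Φ` with a distinguished subset `pos` of
positive roots, a coroot functional `coroot β = ⟨·, β^∨⟩` for each root, and
simple roots `α 1, …, α r`. -/
structure RootData where
  r : ℕ
  V : Type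
  [grp : AddCommGroup V]
  [mod : Module ℚ V]
  Φ : Set V
  pos : Set V
  coroot : V → Module.Dual ℚ V
  α : Fin r → V

attribute [instance] RootData.grp RootData.mod

namespace RootData

variable (R : RootData)

/-- The group of linear automorphisms of `V`, in which the Weyl group lives. -/
abbrev Aut : Type := R.V ≃ₗ[ℚ] R.V

/-- The linear map `v ↦ v - ⟨v, β^∨⟩ β`. -/
noncomputable def reflMap (β : R.V) : R.V →ₗ[ℚ] R.V :=
  LinearMap.id - (R.coroot β).smulRight β

/-- The reflection `s_β` associated to a root `β`, as a linear automorphism. -/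
noncomputable def s (β : R.V) : R.Aut :=
  if h : (R.reflMap β).comp (R.reflMap β) = LinearMap.id then
    LinearEquiv.ofLinear (R.reflMap β) (R.reflMap β) h h
  else LinearEquiv.refl ℚ R.V

/-- The simple reflections `s_i := s_{α_i}`. -/
noncomputable def S (i : Fin R.r) : R.Aut := R.s (R.α i)

/-- The Weyl group `W`, generated by the simple reflections. -/
noncomputable def weylGroup : Subgroup R.Aut := Subgroup.closure (Set.range R.S)

/-- The product `s_{i_1} ⋯ s_{i_k}` of a word in the simple reflections. -/
noncomputable def wordProd (l : List (Fin R.r)) : R.Aut := (l.map R.S).prod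

/-- The length function on `W`: least length of a word in the simple
reflections expressing the given element. -/
noncomputable def len (w : R.Aut) : ℕ :=
  sInf {n | ∃ l : List (Fin R.r), l.length = n ∧ R.wordProd l = w}

/-- A word is reduced if its length equals the length of its product. -/
def Reduced (l : List (Fin R.r)) : Prop := R.len (R.wordProd l) = l.length

/-- The Bruhat order on `W`: `u ≤ w` iff some reduced word for `w` has a
subword whose product is `u`. -/
def BruhatLE (u w : R.Aut) : Prop :=
  ∃ l : List (Fin R.r), R.Reduced l ∧ R.wordProd l = w ∧
    ∃ l' : List (Fin R.r), l'.Sublist l ∧ R.wordProd l' = u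

/-- Strict Bruhat order. -/
def BruhatLT (u w : R.Aut) : Prop := R.BruhatLE u w ∧ u ≠ w

/-- One step of the Demazure product: `s_i * w := max {w, s_i w}`. -/
noncomputable def dmulStep (i : Fin R.r) (x : R.Aut) : R.Aut :=
  if R.len x < R.len (R.S i * x) then R.S i * x else x

/-- Demazure product of a word in the simple reflections against `w`:
`s_{i_1} * (s_{i_2} * (⋯ * (s_{i_k} * w)))`. -/
noncomputable def dmulList (l : List (Fin R.r)) (w : R.Aut) : R.Aut :=
  l.foldr R.dmulStep w

/-- The Demazure product `v * w` on the Weyl group, computed by choosing a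
reduced word for `v` (it is independent of this choice). -/
noncomputable def dmul (v w : R.Aut) : R.Aut :=
  if h : ∃ l : List (Fin R.r), R.Reduced l ∧ R.wordProd l = v then
    R.dmulList h.choose w
  else v * w

/-- The parabolic subgroup `W_{P_i}` generated by the simple reflections
`s_j`, `j ≠ i`. -/
noncomputable def WPar (i : Fin R.r) : Subgroup R.Aut :=
  Subgroup.closure (R.S '' {j | j ≠ i})

/-- `W^{P_i}`: the set of minimal-length representatives of cosets of
`W/W_{P_i}`. -/
def minReps (i : Fin R.r) : Set R.Aut :=
  {v | v ∈ R.weylGroup ∧ ∀ p ∈ R.WPar i, R.len v ≤ R.len (v * p)}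

/-- `u` is the minimal-length representative of the coset `w W_{P_i}`. -/
def IsMinRep (i : Fin R.r) (u w : R.Aut) : Prop :=
  u ∈ R.minReps i ∧ u⁻¹ * w ∈ R.WPar i

/-- A weight is dominant if it pairs nonnegatively with every simple coroot. -/
def Dominant (lam : R.V) : Prop := ∀ i : Fin R.r, 0 ≤ R.coroot (R.α i) lam

/-- The dual action of the Weyl group on `V* `: `(u f)(v) = f(u⁻¹ v)`. -/
noncomputable def dualAct (u : R.Aut) (f : Module.Dual ℚ R.V) : Module.Dual ℚ R.V :=
  f.comp (u.symm : R.V →ₗ[ℚ] R.V)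

/-- The Demazure polytope `P_λ^w := conv {uλ : u ∈ W, u ≤ w}`. -/
noncomputable def demPolytope (lam : R.V) (w : R.Aut) : Set R.V :=
  convexHull ℚ {m | ∃ u : R.Aut, u ∈ R.weylGroup ∧ R.BruhatLE u w ∧ m = u lam}

/-- Membership in the weight lattice `X`. -/
def IsWeight (lam : R.V) : Prop := ∀ β ∈ R.Φ, ∃ m : ℤ, R.coroot β lam = (m : ℚ)

/-- The root lattice `Q = ℤΦ`. -/
noncomputable def rootLattice : AddSubgroup R.V := AddSubgroup.closure R.Φ

/-- `w₀` is the longest element of the Weyl group. -/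
def IsLongest (w₀ : R.Aut) : Prop :=
  w₀ ∈ R.weylGroup ∧ ∀ g ∈ R.weylGroup, R.len g ≤ R.len w₀

/-- The positive roots `Φ_{P_i}⁺ = Φ⁺ ∩ span {α_j : j ≠ i}` of the standard
Levi subsystem. -/
def parPos (i : Fin R.r) : Set R.V :=
  {η | η ∈ R.pos ∧ η ∈ Submodule.span ℚ (R.α '' {j | j ≠ i})}

/-- The value `D_i (e^λ)` of the Demazure operator on a basis element of the
group ring `ℤ[X]`. -/
noncomputable def demOnBasis (i : Fin R.r) (lam : R.V) : R.V →₀ ℤ :=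
  if 0 ≤ ⌊R.coroot (R.α i) lam⌋ then
    ∑ k ∈ Finset.range (⌊R.coroot (R.α i) lam⌋.toNat + 1),
      Finsupp.single (lam - (k : ℚ) • R.α i) 1
  else if ⌊R.coroot (R.α i) lam⌋ = -1 then 0
  else - ∑ k ∈ Finset.range ((-⌊R.coroot (R.α i) lam⌋).toNat - 1),
      Finsupp.single (lam + ((k : ℚ) + 1) • R.α i) 1

/-- The Demazure operator `D_i`, as a `ℤ`-linear endomorphism of the group
ring `ℤ[X]` (realized as finitely supported functions `V →₀ ℤ`). -/
noncomputable def demOp (i : Fin R.r) : (R.V →₀ ℤ) →ₗ[ℤ] (R.V →₀ ℤ) :=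
  Finsupp.lsum ℤ fun lam => LinearMap.toSpanSingleton ℤ (R.V →₀ ℤ) (R.demOnBasis i lam)

/-- The Demazure character `D_{i_1} ⋯ D_{i_k} (e^λ)`. -/
noncomputable def demChar (l : List (Fin R.r)) (lam : R.V) : R.V →₀ ℤ :=
  l.foldr (fun i p => R.demOp i p) (Finsupp.single lam 1)

/-- The axioms of a finite crystallographic root system spanning `V`, with
simple roots `α_i` and positive roots `pos`. -/
structure IsRootSystem (R : RootData) : Prop where
  finite : R.Φ.Finite
  span_top : Submodule.span ℚ R.Φ = ⊤
  ne_zero : ∀ β ∈ R.Φ, β ≠ 0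
  coroot_self : ∀ β ∈ R.Φ, R.coroot β β = 2
  crystallographic : ∀ β ∈ R.Φ, ∀ γ ∈ R.Φ, ∃ m : ℤ, R.coroot β γ = (m : ℚ)
  reflection_stable : ∀ β ∈ R.Φ, ∀ γ ∈ R.Φ, γ - R.coroot β γ • β ∈ R.Φ
  simple_mem : ∀ i, R.α i ∈ R.Φ
  indep : LinearIndependent ℚ R.α
  pos_subset : R.pos ⊆ R.Φ
  pos_or_neg : ∀ β ∈ R.Φ, (β ∈ R.pos ∧ -β ∉ R.pos) ∨ (β ∉ R.pos ∧ -β ∈ R.pos)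
  simple_pos : ∀ i, R.α i ∈ R.pos
  pos_nonneg_comb : ∀ β ∈ R.pos, ∃ c : Fin R.r → ℚ, (∀ i, 0 ≤ c i) ∧ β = ∑ i, c i • R.α i

end RootData

/-!
For a positive root `γ` and `w ∈ W`, the exchange property gives `s_γ w < w ↔ w⁻¹ γ < 0`.
So the left side of the equivalence says that `y⁻¹ γ` is negative, and the right side says that
`(v y u⁻¹)⁻¹ (v γ) = u (y⁻¹ γ)` is negative. Since `y ∈ W_{P_i}`, the root `y⁻¹ γ` lies in
`Φ_{P_i}`, and a minimal coset representative `u` sends every simple root `α_j`, `j ≠ i`, to a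
positive root (otherwise `u s_j` would be shorter than `u`), hence sends `Φ_{P_i}⁺` into `Φ⁺`.
Thus `u` preserves the sign of `y⁻¹ γ`.
-/

theorem Subgroup.mapsTo_smul_of_mem_closure {G α : Type*} [Group G] [MulAction G α] {T : Set G}
    {X : Set α} (hT : ∀ t ∈ T, Set.MapsTo (t • ·) X X ∧ Set.MapsTo (t⁻¹ • ·) X X) {g : G}
    (hg : g ∈ Subgroup.closure T) : Set.MapsTo (g • ·) X X := by
  induction hg using Subgroup.closure_induction'' with
  | mem t ht => exact (hT t ht).1
  | inv_mem t ht => exact (hT t ht).2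
  | one => exact fun x hx => by simpa using hx
  | mul a b _ _ ha hb => exact fun x hx => by simpa [mul_smul] using ha (hb hx)

namespace RootData

variable {R : RootData}

theorem reflMap_apply (β x : R.V) : R.reflMap β x = x - R.coroot β x • β := by
  simp [reflMap]

theorem IsRootSystem.s_apply (hR : R.IsRootSystem) {β : R.V} (hβ : β ∈ R.Φ) (x : R.V) :
    R.s β x = x - R.coroot β x • β := by
  have hinv : (R.reflMap β).comp (R.reflMap β) = LinearMap.id := by
    ext x
    simp only [LinearMap.comp_apply, reflMap_apply, LinearMap.id_apply, map_sub, map_smul,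
      hR.coroot_self β hβ]
    module
  rw [s, dif_pos hinv]
  exact reflMap_apply β x

theorem IsRootSystem.s_mul_self (hR : R.IsRootSystem) {β : R.V} (hβ : β ∈ R.Φ) :
    R.s β * R.s β = 1 := by
  ext x
  change R.s β (R.s β x) = x
  rw [hR.s_apply hβ, hR.s_apply hβ, map_sub, map_smul, hR.coroot_self β hβ, smul_eq_mul]
  module

theorem IsRootSystem.s_inv (hR : R.IsRootSystem) {β : R.V} (hβ : β ∈ R.Φ) :
    (R.s β)⁻¹ = R.s β :=
  inv_eq_of_mul_eq_one_right (hR.s_mul_self hβ)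

theorem IsRootSystem.s_apply_self (hR : R.IsRootSystem) {β : R.V} (hβ : β ∈ R.Φ) :
    R.s β β = -β := by
  rw [hR.s_apply hβ, hR.coroot_self β hβ]
  module

theorem IsRootSystem.s_apply_mem (hR : R.IsRootSystem) {β x : R.V} (hβ : β ∈ R.Φ)
    (hx : x ∈ R.Φ) : R.s β x ∈ R.Φ := by
  rw [hR.s_apply hβ]
  exact hR.reflection_stable β hβ x hx

theorem IsRootSystem.neg_not_mem_pos (hR : R.IsRootSystem) {β : R.V} (hβ : β ∈ R.Φ)
    (h : β ∈ R.pos) : -β ∉ R.pos :=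
  ((hR.pos_or_neg β hβ).resolve_right fun h' => h'.1 h).2

theorem IsRootSystem.neg_mem_pos_of_not_mem_pos (hR : R.IsRootSystem) {β : R.V}
    (hβ : β ∈ R.Φ) (h : β ∉ R.pos) : -β ∈ R.pos :=
  ((hR.pos_or_neg β hβ).resolve_left fun h' => h h'.1).2

/-- The composite of the two reflections is the transvection `x ↦ x + (f x - g x) • β`;
iterating it on a root where `f ≠ g` would produce infinitely many roots. -/
theorem IsRootSystem.dual_eq_of_reflections_mem (hR : R.IsRootSystem) {β : R.V}
    (hβ : β ∈ R.Φ) {f g : Module.Dual ℚ R.V} (hfβ : f β = 2) (hgβ : g β = 2)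
    (hf : ∀ x ∈ R.Φ, x - f x • β ∈ R.Φ) (hg : ∀ x ∈ R.Φ, x - g x • β ∈ R.Φ) : f = g := by
  refine LinearMap.ext_on hR.span_top fun x₀ hx₀ => ?_
  by_contra hne
  have step : ∀ x ∈ R.Φ, x + (f x - g x) • β ∈ R.Φ := by
    intro x hx
    convert hg _ (hf x hx) using 1
    simp only [map_sub, map_smul, hgβ, smul_eq_mul]
    module
  have iter : ∀ n : ℕ, x₀ + ((n : ℚ) * (f x₀ - g x₀)) • β ∈ R.Φ := by
    intro n
    induction n with
    | zero => simpa using hx₀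
    | succ n ih =>
      convert step _ ih using 1
      simp only [map_add, map_smul, hfβ, hgβ, smul_eq_mul]
      push_cast
      module
  have hinj : Function.Injective fun n : ℕ => x₀ + ((n : ℚ) * (f x₀ - g x₀)) • β := by
    intro n m hnm
    have := mul_right_cancel₀ (sub_ne_zero.mpr hne)
      (smul_left_injective ℚ (hR.ne_zero β hβ) (add_left_cancel hnm))
    exact_mod_cast this
  exact hR.finite.not_infinite (Set.infinite_of_injective_forall_mem hinj iter)

theorem IsRootSystem.eq_s_of_apply (hR : R.IsRootSystem) {β : R.V} (hβ : β ∈ R.Φ) (T : R.Aut)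
    (f : Module.Dual ℚ R.V) (hT : ∀ x, T x = x - f x • β) (hfβ : f β = 2)
    (hTΦ : Set.MapsTo T R.Φ R.Φ) : T = R.s β := by
  have hf : f = R.coroot β :=
    hR.dual_eq_of_reflections_mem hβ hfβ (hR.coroot_self β hβ)
      (fun x hx => hT x ▸ hTΦ hx) (fun x hx => hR.reflection_stable β hβ x hx)
  ext x
  rw [hT x, hf, hR.s_apply hβ]

theorem IsRootSystem.s_smul (hR : R.IsRootSystem) {β : R.V} {c : ℚ} (hβ : β ∈ R.Φ)
    (hcβ : c • β ∈ R.Φ) : R.s (c • β) = R.s β := by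
  refine hR.eq_s_of_apply hβ _ (c • R.coroot (c • β)) (fun x => ?_) ?_
    (fun x hx => hR.s_apply_mem hcβ hx)
  · rw [hR.s_apply hcβ, LinearMap.smul_apply, smul_eq_mul]
    module
  · have h2 := hR.coroot_self _ hcβ
    rw [map_smul, smul_eq_mul] at h2
    rw [LinearMap.smul_apply, smul_eq_mul, h2]

theorem S_mem_weylGroup (j : Fin R.r) : R.S j ∈ R.weylGroup :=
  Subgroup.subset_closure ⟨j, rfl⟩

theorem IsRootSystem.S_inv (hR : R.IsRootSystem) (j : Fin R.r) : (R.S j)⁻¹ = R.S j :=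
  hR.s_inv (hR.simple_mem j)

theorem IsRootSystem.S_mul_self (hR : R.IsRootSystem) (j : Fin R.r) : R.S j * R.S j = 1 :=
  hR.s_mul_self (hR.simple_mem j)

theorem IsRootSystem.apply_mem_of_mem_weylGroup (hR : R.IsRootSystem) {g : R.Aut}
    (hg : g ∈ R.weylGroup) {x : R.V} (hx : x ∈ R.Φ) : g x ∈ R.Φ := by
  refine Subgroup.mapsTo_smul_of_mem_closure (fun t ht => ?_) hg hx
  obtain ⟨j, rfl⟩ := ht
  rw [hR.S_inv j, and_self]
  exact fun x hx => hR.s_apply_mem (hR.simple_mem j) hx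

theorem IsRootSystem.mul_s_mul_inv (hR : R.IsRootSystem) {g : R.Aut} (hg : g ∈ R.weylGroup)
    {β : R.V} (hβ : β ∈ R.Φ) : g * R.s β * g⁻¹ = R.s (g β) := by
  refine hR.eq_s_of_apply (hR.apply_mem_of_mem_weylGroup hg hβ) _
    ((R.coroot β).comp (g⁻¹ : R.Aut).toLinearMap) (fun x => ?_) ?_ (fun x hx => ?_)
  · change g (R.s β (g⁻¹ x)) = _
    rw [hR.s_apply hβ, map_sub, map_smul, ← LinearEquiv.mul_apply, mul_inv_cancel]
    rfl
  · change R.coroot β ((g⁻¹ * g) β) = 2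
    rw [inv_mul_cancel]
    exact hR.coroot_self β hβ
  · exact hR.apply_mem_of_mem_weylGroup hg
      (hR.s_apply_mem hβ (hR.apply_mem_of_mem_weylGroup (inv_mem hg) hx))

theorem IsRootSystem.top_le_span_range_α (hR : R.IsRootSystem) :
    ⊤ ≤ Submodule.span ℚ (Set.range R.α) := by
  have hpos : R.pos ⊆ Submodule.span ℚ (Set.range R.α) := fun β hβ => by
    obtain ⟨c, -, rfl⟩ := hR.pos_nonneg_comb β hβ
    exact Submodule.sum_mem _ fun k _ => Submodule.smul_mem _ _ (Submodule.subset_span ⟨k, rfl⟩)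
  rw [← hR.span_top, Submodule.span_le]
  intro β hβ
  rcases hR.pos_or_neg β hβ with ⟨h, -⟩ | ⟨-, h⟩
  · exact hpos h
  · simpa using Submodule.neg_mem _ (hpos h)

noncomputable def IsRootSystem.simpleBasis (hR : R.IsRootSystem) : Module.Basis (Fin R.r) ℚ R.V :=
  Module.Basis.mk hR.indep hR.top_le_span_range_α

theorem IsRootSystem.simpleBasis_apply (hR : R.IsRootSystem) (k : Fin R.r) :
    hR.simpleBasis k = R.α k :=
  Module.Basis.mk_apply _ _ _

theorem IsRootSystem.simpleBasis_repr_α (hR : R.IsRootSystem) (k : Fin R.r) :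
    hR.simpleBasis.repr (R.α k) = Finsupp.single k 1 := by
  rw [← hR.simpleBasis_apply, Module.Basis.repr_self]

theorem IsRootSystem.simpleBasis_repr_nonneg (hR : R.IsRootSystem) {β : R.V} (hβ : β ∈ R.pos)
    (k : Fin R.r) : 0 ≤ hR.simpleBasis.repr β k := by
  obtain ⟨c, hc, rfl⟩ := hR.pos_nonneg_comb β hβ
  simpa [hR.simpleBasis_repr_α, Finsupp.single_apply] using hc k

theorem IsRootSystem.simpleBasis_repr_nonpos (hR : R.IsRootSystem) {β : R.V} (hβΦ : β ∈ R.Φ)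
    (hβ : β ∉ R.pos) (k : Fin R.r) : hR.simpleBasis.repr β k ≤ 0 := by
  simpa using hR.simpleBasis_repr_nonneg (hR.neg_mem_pos_of_not_mem_pos hβΦ hβ) k

theorem IsRootSystem.mem_pos_of_simpleBasis_repr_pos (hR : R.IsRootSystem) {β : R.V}
    (hβΦ : β ∈ R.Φ) {k : Fin R.r} (hk : 0 < hR.simpleBasis.repr β k) : β ∈ R.pos := by
  by_contra h
  exact (hk.trans_le (hR.simpleBasis_repr_nonpos hβΦ h k)).false

theorem IsRootSystem.mem_pos_of_simpleBasis_repr_nonneg (hR : R.IsRootSystem) {β : R.V}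
    (hβΦ : β ∈ R.Φ) (hβ : ∀ k, 0 ≤ hR.simpleBasis.repr β k) : β ∈ R.pos := by
  by_contra h
  apply hR.ne_zero β hβΦ
  have hrepr : hR.simpleBasis.repr β = 0 := Finsupp.ext fun k =>
    le_antisymm (hR.simpleBasis_repr_nonpos hβΦ h k) (hβ k)
  simpa using hrepr

/-- `s_j` changes only the `j`-th coordinate, so the positive `k`-th coordinate survives. -/
theorem IsRootSystem.S_apply_mem_pos (hR : R.IsRootSystem) {j k : Fin R.r} (hk : k ≠ j)
    {β : R.V} (hβ : β ∈ R.pos) (hβk : hR.simpleBasis.repr β k ≠ 0) : R.S j β ∈ R.pos := by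
  have hαj := hR.simple_mem j
  refine hR.mem_pos_of_simpleBasis_repr_pos (hR.s_apply_mem hαj (hR.pos_subset hβ)) (k := k) ?_
  have hrepr : hR.simpleBasis.repr (R.S j β) k = hR.simpleBasis.repr β k := by
    simp [S, hR.s_apply hαj, hR.simpleBasis_repr_α, hk.symm]
  rw [hrepr]
  exact (hR.simpleBasis_repr_nonneg hβ k).lt_of_ne' hβk

theorem IsRootSystem.s_eq_S_of_simpleBasis_repr_eq_zero (hR : R.IsRootSystem) {j : Fin R.r}
    {β : R.V} (hβΦ : β ∈ R.Φ) (h : ∀ k, k ≠ j → hR.simpleBasis.repr β k = 0) :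
    R.s β = R.S j := by
  have hβ : β = hR.simpleBasis.repr β j • R.α j := by
    conv_lhs => rw [← hR.simpleBasis.sum_repr β]
    rw [Finset.sum_eq_single j (fun k _ hk => by rw [h k hk, zero_smul]) (by simp),
      hR.simpleBasis_apply]
  rw [S, hβ, hR.s_smul (hR.simple_mem j) (hβ ▸ hβΦ)]

theorem wordProd_nil : R.wordProd [] = 1 := rfl

theorem wordProd_cons (j : Fin R.r) (l : List (Fin R.r)) :
    R.wordProd (j :: l) = R.S j * R.wordProd l := by
  simp [wordProd]

theorem wordProd_append (l l' : List (Fin R.r)) :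
    R.wordProd (l ++ l') = R.wordProd l * R.wordProd l' := by
  simp [wordProd]

theorem wordProd_mem_weylGroup (l : List (Fin R.r)) : R.wordProd l ∈ R.weylGroup := by
  induction l with
  | nil => exact one_mem _
  | cons j l ih => rw [wordProd_cons]; exact mul_mem (S_mem_weylGroup j) ih

theorem IsRootSystem.wordProd_reverse (hR : R.IsRootSystem) (l : List (Fin R.r)) :
    R.wordProd l.reverse = (R.wordProd l)⁻¹ := by
  induction l with
  | nil => simp [wordProd_nil]
  | cons j l ih =>
    rw [wordProd_cons, List.reverse_cons, wordProd_append, ih, mul_inv_rev, hR.S_inv]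
    simp [wordProd]

theorem IsRootSystem.exists_wordProd_eq (hR : R.IsRootSystem) {g : R.Aut}
    (hg : g ∈ R.weylGroup) : ∃ l : List (Fin R.r), R.wordProd l = g := by
  induction hg using Subgroup.closure_induction with
  | mem x hx =>
    obtain ⟨j, rfl⟩ := hx
    exact ⟨[j], by simp [wordProd]⟩
  | one => exact ⟨[], rfl⟩
  | mul a b _ _ ha hb =>
    obtain ⟨la, rfl⟩ := ha
    obtain ⟨lb, rfl⟩ := hb
    exact ⟨la ++ lb, wordProd_append la lb⟩
  | inv a _ ha =>
    obtain ⟨la, rfl⟩ := ha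
    exact ⟨la.reverse, hR.wordProd_reverse la⟩

theorem len_le_length {l : List (Fin R.r)} {w : R.Aut} (h : R.wordProd l = w) :
    R.len w ≤ l.length :=
  Nat.sInf_le ⟨l, rfl, h⟩

theorem IsRootSystem.exists_reduced (hR : R.IsRootSystem) {w : R.Aut} (hw : w ∈ R.weylGroup) :
    ∃ l : List (Fin R.r), R.Reduced l ∧ R.wordProd l = w := by
  obtain ⟨l₀, hl₀⟩ := hR.exists_wordProd_eq hw
  obtain ⟨l, hlen, hprod⟩ := Nat.sInf_mem (s := {n | ∃ l, l.length = n ∧ R.wordProd l = w})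
    ⟨l₀.length, l₀, rfl, hl₀⟩
  exact ⟨l, by rw [Reduced, hprod]; exact hlen.symm, hprod⟩

theorem IsRootSystem.len_inv (hR : R.IsRootSystem) {w : R.Aut} (hw : w ∈ R.weylGroup) :
    R.len w⁻¹ = R.len w := by
  have key : ∀ x ∈ R.weylGroup, R.len x⁻¹ ≤ R.len x := by
    intro x hx
    obtain ⟨l, hred, rfl⟩ := hR.exists_reduced hx
    calc R.len (R.wordProd l)⁻¹ ≤ l.reverse.length := len_le_length (hR.wordProd_reverse l)
      _ = R.len (R.wordProd l) := by rw [List.length_reverse, hred]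
  exact le_antisymm (key w hw) (by simpa using key w⁻¹ (inv_mem hw))

theorem BruhatLE.mem_weylGroup {x w : R.Aut} (h : R.BruhatLE x w) : x ∈ R.weylGroup := by
  obtain ⟨-, -, -, l', -, rfl⟩ := h
  exact wordProd_mem_weylGroup l'

theorem BruhatLT.len_lt {x w : R.Aut} (h : R.BruhatLT x w) : R.len x < R.len w := by
  obtain ⟨⟨l, hred, rfl, l', hsub, rfl⟩, hne⟩ := h
  refine (len_le_length rfl).trans_lt ?_
  rw [hred]
  refine hsub.length_le.lt_of_ne fun hlen => hne ?_
  rw [hsub.eq_of_length hlen]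

/-- Either `s_j γ` is positive and the conjugation formula `s_{s_j γ} = s_j s_γ s_j` passes to
the tail of the word, or `γ` is a multiple of `α_j` and the first letter is deleted. -/
theorem IsRootSystem.exists_sublist_wordProd_eq_s_mul (hR : R.IsRootSystem)
    (l : List (Fin R.r)) {γ : R.V} (hγ : γ ∈ R.pos) (hneg : (R.wordProd l)⁻¹ γ ∉ R.pos) :
    ∃ l', l'.Sublist l ∧ R.wordProd l' = R.s γ * R.wordProd l := by
  induction l generalizing γ with
  | nil => exact absurd hγ (by simpa [wordProd_nil] using hneg)
  | cons j l ih =>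
    have hγΦ : γ ∈ R.Φ := hR.pos_subset hγ
    by_cases hjγ : R.S j γ ∈ R.pos
    · have hneg' : (R.wordProd l)⁻¹ (R.S j γ) ∉ R.pos := by
        rwa [wordProd_cons, mul_inv_rev, hR.S_inv] at hneg
      obtain ⟨l', hsub, hprod⟩ := ih hjγ hneg'
      refine ⟨j :: l', hsub.cons_cons j, ?_⟩
      rw [wordProd_cons, hprod, ← hR.mul_s_mul_inv (S_mem_weylGroup j) hγΦ, hR.S_inv,
        wordProd_cons]
      simp only [mul_assoc, ← mul_assoc (R.S j) (R.S j), hR.S_mul_self, one_mul]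
    · have hray : ∀ k, k ≠ j → hR.simpleBasis.repr γ k = 0 := fun k hk => by
        by_contra hγk
        exact hjγ (hR.S_apply_mem_pos hk hγ hγk)
      refine ⟨l, List.sublist_cons_self j l, ?_⟩
      rw [wordProd_cons, hR.s_eq_S_of_simpleBasis_repr_eq_zero hγΦ hray, ← mul_assoc,
        hR.S_mul_self, one_mul]

theorem IsRootSystem.s_mul_ne (hR : R.IsRootSystem) {γ : R.V} (hγ : γ ∈ R.Φ) (w : R.Aut) :
    R.s γ * w ≠ w := by
  intro h
  have hγ' : R.s γ γ = γ := by rw [mul_eq_right.mp h]; rfl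
  have : IsAddTorsionFree R.V := .of_module_rat R.V
  rw [hR.s_apply_self hγ, neg_eq_self] at hγ'
  exact hR.ne_zero γ hγ hγ'

theorem IsRootSystem.bruhatLT_s_mul_of_not_mem_pos (hR : R.IsRootSystem) {γ : R.V}
    (hγ : γ ∈ R.pos) {w : R.Aut} (hw : w ∈ R.weylGroup) (hneg : w⁻¹ γ ∉ R.pos) :
    R.BruhatLT (R.s γ * w) w := by
  obtain ⟨l, hred, rfl⟩ := hR.exists_reduced hw
  obtain ⟨l', hsub, hprod⟩ := hR.exists_sublist_wordProd_eq_s_mul l hγ hneg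
  exact ⟨⟨l, hred, rfl, l', hsub, hprod⟩, hR.s_mul_ne (hR.pos_subset hγ) _⟩

theorem IsRootSystem.bruhatLT_s_mul_iff (hR : R.IsRootSystem) {γ : R.V} (hγ : γ ∈ R.pos)
    {w : R.Aut} (hw : w ∈ R.weylGroup) : R.BruhatLT (R.s γ * w) w ↔ w⁻¹ γ ∉ R.pos := by
  refine ⟨fun h hpos => ?_, hR.bruhatLT_s_mul_of_not_mem_pos hγ hw⟩
  have hγΦ : γ ∈ R.Φ := hR.pos_subset hγ
  -- otherwise `w = s_γ (s_γ w)` would also be shorter than `s_γ w`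
  have hneg : (R.s γ * w)⁻¹ γ ∉ R.pos := by
    rw [mul_inv_rev, hR.s_inv hγΦ, LinearEquiv.mul_apply, hR.s_apply_self hγΦ, map_neg]
    exact hR.neg_not_mem_pos (hR.apply_mem_of_mem_weylGroup (inv_mem hw) hγΦ) hpos
  have h' := hR.bruhatLT_s_mul_of_not_mem_pos hγ h.1.mem_weylGroup hneg
  rw [← mul_assoc, hR.s_mul_self hγΦ, one_mul] at h'
  exact lt_asymm h.len_lt h'.len_lt

theorem WPar_le_weylGroup (i : Fin R.r) : R.WPar i ≤ R.weylGroup := by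
  rw [WPar, Subgroup.closure_le]
  rintro _ ⟨j, -, rfl⟩
  exact S_mem_weylGroup j

theorem IsRootSystem.apply_mem_span_of_mem_WPar (hR : R.IsRootSystem) {i : Fin R.r}
    {g : R.Aut} (hg : g ∈ R.WPar i) {x : R.V}
    (hx : x ∈ Submodule.span ℚ (R.α '' {j | j ≠ i})) :
    g x ∈ Submodule.span ℚ (R.α '' {j | j ≠ i}) := by
  refine Subgroup.mapsTo_smul_of_mem_closure (fun t ht => ?_) hg hx
  obtain ⟨j, hj, rfl⟩ := ht
  rw [hR.S_inv j, and_self]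
  intro x hx
  change R.s (R.α j) x ∈ _
  rw [hR.s_apply (hR.simple_mem j)]
  exact Submodule.sub_mem _ hx (Submodule.smul_mem _ _ (Submodule.subset_span ⟨j, hj, rfl⟩))

theorem IsRootSystem.simpleBasis_repr_eq_zero_of_mem_span (hR : R.IsRootSystem) {i : Fin R.r}
    {x : R.V} (hx : x ∈ Submodule.span ℚ (R.α '' {j | j ≠ i})) :
    hR.simpleBasis.repr x i = 0 := by
  have hle : Submodule.span ℚ (R.α '' {j | j ≠ i}) ≤ LinearMap.ker (hR.simpleBasis.coord i) := by
    rw [Submodule.span_le]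
    rintro _ ⟨j, hj, rfl⟩
    simpa [hR.simpleBasis_repr_α, Finsupp.single_apply] using hj
  exact hle hx

theorem IsRootSystem.minReps_apply_α_mem_pos (hR : R.IsRootSystem) {i : Fin R.r} {u : R.Aut}
    (hu : u ∈ R.minReps i) {j : Fin R.r} (hj : j ≠ i) : u (R.α j) ∈ R.pos := by
  by_contra hneg
  have hlt := (hR.bruhatLT_s_mul_of_not_mem_pos (hR.simple_pos j) (inv_mem hu.1)
    (by rwa [inv_inv])).len_lt
  rw [show R.s (R.α j) * u⁻¹ = (u * R.S j)⁻¹ by rw [mul_inv_rev, hR.S_inv]; rfl,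
    hR.len_inv (mul_mem hu.1 (S_mem_weylGroup j)), hR.len_inv hu.1] at hlt
  exact hlt.not_ge (hu.2 (R.S j) (Subgroup.subset_closure ⟨j, hj, rfl⟩))

/-- `u δ` is a nonnegative combination of the positive roots `u α_j`, `j ≠ i`. -/
theorem IsRootSystem.minReps_apply_mem_pos (hR : R.IsRootSystem) {i : Fin R.r} {u : R.Aut}
    (hu : u ∈ R.minReps i) {δ : R.V} (hδ : δ ∈ R.parPos i) : u δ ∈ R.pos := by
  obtain ⟨hδpos, hδspan⟩ := hδ
  refine hR.mem_pos_of_simpleBasis_repr_nonneg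
    (hR.apply_mem_of_mem_weylGroup hu.1 (hR.pos_subset hδpos)) fun m => ?_
  have hsum : u δ = ∑ k, hR.simpleBasis.repr δ k • u (R.α k) := by
    conv_lhs => rw [← hR.simpleBasis.sum_repr δ]
    simp [hR.simpleBasis_apply]
  rw [hsum]
  simp only [map_sum, map_smul, Finsupp.coe_finsetSum, Finset.sum_apply, Finsupp.smul_apply,
    smul_eq_mul]
  refine Finset.sum_nonneg fun k _ => ?_
  rcases eq_or_ne k i with rfl | hk
  · rw [hR.simpleBasis_repr_eq_zero_of_mem_span hδspan, zero_mul]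
  · exact mul_nonneg (hR.simpleBasis_repr_nonneg hδpos k)
      (hR.simpleBasis_repr_nonneg (hR.minReps_apply_α_mem_pos hu hk) m)

theorem IsRootSystem.minReps_apply_mem_pos_iff (hR : R.IsRootSystem) {i : Fin R.r}
    {u : R.Aut} (hu : u ∈ R.minReps i) {δ : R.V} (hδ : δ ∈ R.Φ)
    (hδspan : δ ∈ Submodule.span ℚ (R.α '' {j | j ≠ i})) : u δ ∈ R.pos ↔ δ ∈ R.pos := by
  refine ⟨fun h => ?_, fun h => hR.minReps_apply_mem_pos hu ⟨h, hδspan⟩⟩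
  by_contra hneg
  have h' := hR.minReps_apply_mem_pos hu
    ⟨hR.neg_mem_pos_of_not_mem_pos hδ hneg, Submodule.neg_mem _ hδspan⟩
  rw [map_neg] at h'
  exact hR.neg_not_mem_pos (hR.apply_mem_of_mem_weylGroup hu.1 hδ) h h'

end RootData

theorem statement16 (R : RootData) (hR : R.IsRootSystem)
    (i : Fin R.r) (u v : R.Aut)
    (hu : u ∈ R.minReps i) (hv : v ∈ R.minReps i)
    (y : R.Aut) (hy : y ∈ R.WPar i)
    (γ : R.V) (hγ : γ ∈ R.parPos i) :
    R.BruhatLT (R.s γ * y) y ↔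
      R.BruhatLT (R.s (v γ) * (v * y * u⁻¹)) (v * y * u⁻¹) := by
  have hyW : y ∈ R.weylGroup := RootData.WPar_le_weylGroup i hy
  have hwW : v * y * u⁻¹ ∈ R.weylGroup := mul_mem (mul_mem hv.1 hyW) (inv_mem hu.1)
  have harg : (v * y * u⁻¹)⁻¹ (v γ) = u (y⁻¹ γ) := by
    simp [mul_inv_rev, LinearEquiv.mul_apply]
  rw [hR.bruhatLT_s_mul_iff hγ.1 hyW, hR.bruhatLT_s_mul_iff (hR.minReps_apply_mem_pos hv hγ) hwW,
    harg, hR.minReps_apply_mem_pos_iff hu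
      (hR.apply_mem_of_mem_weylGroup (inv_mem hyW) (hR.pos_subset hγ.1))
      (hR.apply_mem_span_of_mem_WPar (inv_mem hy) hγ.2)]
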